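/- arXiv:2509.02885 — 6 statements merged into one kernel-verified Lean document; each statement's English description precedes it below -/
import Mathlib

section
/- For any two complete rankings π and σ over the same finite universe U of size n (i.e., bijections π, σ : U → {1,…,n}), the LR-distance equals Spearman's footrule distance: LR(π,σ) = Σ_{e∈U} |π(e) − σ(e)|. -/
/-- The LR-distance between two rankings `π, σ : U → ℕ`, restricted to the
rank interval `[a, b]`, defined recursively: it is `0` if `b ≤ a` (in particular
if `a = b`), and otherwise, with `mid = (a+b)/2`, it is the number of elements
placed by `π` in `[1, mid]` but by `σ` in `(mid, ∞)`, plus the number of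
elements placed by `π` in `(mid, ∞)` but by `σ` in `[1, mid]`, plus the
LR-distances on `[a, mid]` and `[mid+1, b]`. -/
def LRint {U : Type*} [Fintype U] (π σ : U → ℕ) (a b : ℕ) : ℕ :=
  if h : b ≤ a then 0
  else
    (Finset.univ.filter (fun e => π e ≤ (a + b) / 2 ∧ (a + b) / 2 < σ e)).card +
    (Finset.univ.filter (fun e => (a + b) / 2 < π e ∧ σ e ≤ (a + b) / 2)).card +
    LRint π σ a ((a + b) / 2) + LRint π σ ((a + b) / 2 + 1) b
termination_by b - a
decreasing_by
  all_goals omega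

/-- The LR-distance between two complete rankings of size `n`. -/
def LRdist {U : Type*} [Fintype U] (π σ : U → ℕ) (n : ℕ) : ℕ :=
  LRint π σ 1 n


/-- Crossing number at threshold `t`. -/
def crossNum {U : Type*} [Fintype U] (π σ : U → ℕ) (t : ℕ) : ℕ :=
  (Finset.univ.filter (fun e => π e ≤ t ∧ t < σ e)).card +
  (Finset.univ.filter (fun e => t < π e ∧ σ e ≤ t)).card

lemma LRint_eq_sum {U : Type*} [Fintype U] (π σ : U → ℕ) :
    ∀ k a b, b - a ≤ k → LRint π σ a b = ∑ t ∈ Finset.Ico a b, crossNum π σ t := by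
  intro k
  induction k with
  | zero =>
    intro a b h
    rw [LRint]
    rw [dif_pos (by omega)]
    rw [Finset.Ico_eq_empty (by omega), Finset.sum_empty]
  | succ k ih =>
    intro a b h
    rw [LRint]
    by_cases hba : b ≤ a
    · rw [dif_pos hba, Finset.Ico_eq_empty (by omega), Finset.sum_empty]
    · rw [dif_neg hba]
      set m := (a + b) / 2 with hm
      have ham : a ≤ m := by omega
      have hmb : m < b := by omega
      rw [ih a m (by omega), ih (m+1) b (by omega)]
      have h1 : Finset.Ico a b = Finset.Ico a (m+1) ∪ Finset.Ico (m+1) b :=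
        (Finset.Ico_union_Ico_eq_Ico (by omega) (by omega)).symm
      have h2 : Finset.Ico a (m+1) = Finset.Ico a m ∪ {m} := by
        ext t; simp only [Finset.mem_Ico, Finset.mem_union, Finset.mem_singleton]; omega
      rw [h1, Finset.sum_union (by simp [Finset.Ico_disjoint_Ico_consecutive]), h2,
        Finset.sum_union (by simp)]
      simp only [Finset.sum_singleton, crossNum]
      ring

/-- For any two complete rankings `π` and `σ` over the same
finite universe `U` of size `n` (bijections onto `{1, …, n}`), the LR-distance
equals Spearman's footrule distance. -/
theorem lr_eq_footrule {U : Type*} [Fintype U] {n : ℕ}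
    (hU : Fintype.card U = n)
    (π σ : U → ℕ)
    (hπinj : Function.Injective π) (hπmem : ∀ e, π e ∈ Finset.Icc 1 n)
    (hσinj : Function.Injective σ) (hσmem : ∀ e, σ e ∈ Finset.Icc 1 n) :
    LRdist π σ n = ∑ e : U, ((π e : ℤ) - (σ e : ℤ)).natAbs := by
  rw [LRdist, LRint_eq_sum π σ n 1 n (by omega)]
  simp only [crossNum, Finset.card_filter, ← Finset.sum_add_distrib]
  rw [Finset.sum_comm]
  refine Finset.sum_congr rfl fun e _ => ?_
  have hπ := hπmem e; have hσ := hσmem e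
  simp only [Finset.mem_Icc] at hπ hσ
  rw [Finset.sum_add_distrib]
  have h1 : (∑ t ∈ Finset.Ico 1 n, if π e ≤ t ∧ t < σ e then 1 else 0)
      = (Finset.Ico (π e) (σ e)).card := by
    rw [Finset.card_eq_sum_ones]
    rw [show Finset.Ico (π e) (σ e)
        = (Finset.Ico 1 n).filter (fun t => π e ≤ t ∧ t < σ e) by
      ext t; simp only [Finset.mem_Ico, Finset.mem_filter]; omega]
    rw [Finset.sum_filter]
  have h2 : (∑ t ∈ Finset.Ico 1 n, if t < π e ∧ σ e ≤ t then 1 else 0)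
      = (Finset.Ico (σ e) (π e)).card := by
    rw [Finset.card_eq_sum_ones]
    rw [show Finset.Ico (σ e) (π e)
        = (Finset.Ico 1 n).filter (fun t => t < π e ∧ σ e ≤ t) by
      ext t; simp only [Finset.mem_Ico, Finset.mem_filter]; omega]
    rw [Finset.sum_filter]
  rw [h1, h2, Nat.card_Ico, Nat.card_Ico]
  omega
end

section
/- Let π, σ : U → {1,…,n} be bijections on a finite set U of size n, and let 1 ≤ j ≤ k ≤ n. Then the LR-distance restricted to the interval [j,k] equals the sum of the cut counts over cuts i with j ≤ i ≤ k−1: LR_{[j,k]}(π,σ) = Σ_{i=j}^{k−1} d_i(π,σ). -/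
/-- The cut count `d_i(π,σ) = |{e : π(e) ≤ i < σ(e)}| + |{e : σ(e) ≤ i < π(e)}|`. -/
def cutCount {U : Type*} [Fintype U] (π σ : U → ℕ) (i : ℕ) : ℕ :=
  (Finset.univ.filter (fun e => π e ≤ i ∧ i < σ e)).card +
  (Finset.univ.filter (fun e => σ e ≤ i ∧ i < π e)).card

theorem lrint_aux {U : Type*} [Fintype U] (π σ : U → ℕ) (j k : ℕ) :
    LRint π σ j k = ∑ i ∈ Finset.Ico j k, cutCount π σ i := by
  rw [LRint]
  split
  · rename_i h
    rw [Finset.Ico_eq_empty (by omega), Finset.sum_empty]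
  · rename_i h
    have hjk : j < k := by omega
    set m := (j + k) / 2 with hm
    have hm1 : j ≤ m := by omega
    have hm2 : m < k := by omega
    rw [lrint_aux π σ j m, lrint_aux π σ (m + 1) k]
    rw [← Finset.sum_Ico_consecutive _ (by omega : j ≤ m + 1) (by omega : m + 1 ≤ k),
      Finset.sum_Ico_succ_top hm1, cutCount]
    simp only [and_comm]
    omega
termination_by k - j
decreasing_by all_goals omega

/-- For bijections `π, σ : U → {1,…,n}` and `1 ≤ j ≤ k ≤ n`,
the LR-distance restricted to `[j,k]` equals the sum of the cut counts over
cuts `i` with `j ≤ i ≤ k−1`. -/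
theorem lrint_eq_sum_cutCount {U : Type*} [Fintype U] {n : ℕ}
    (hU : Fintype.card U = n)
    (π σ : U → ℕ)
    (hπinj : Function.Injective π) (hπmem : ∀ e, π e ∈ Finset.Icc 1 n)
    (hσinj : Function.Injective σ) (hσmem : ∀ e, σ e ∈ Finset.Icc 1 n)
    (j k : ℕ) (hj : 1 ≤ j) (hjk : j ≤ k) (hk : k ≤ n) :
    LRint π σ j k = ∑ i ∈ Finset.Ico j k, cutCount π σ i :=
  lrint_aux π σ j k
end

section
/- Let Π = [π_1,…,π_m] be a list of complete rankings (bijections π_i : U → {1,…,n}) over a finite set U of size n, and let ω : U → {1,…,n} be a bijection such that for every e ∈ U, the value ω(e) minimizes x ↦ Σ_{i=1}^{m} |x − π_i(e)| over all integers x (i.e., ω(e) is a median of the positions π_1(e),…,π_m(e)). Then ω is a footrule-optimal aggregation: for every bijection τ : U → {1,…,n}, F(ω,Π) ≤ F(τ,Π). -/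
/-- Let `Π = [π_1,…,π_m]` be a list of complete rankings
(bijections onto `{1,…,n}`) over a finite set `U` of size `n`, and let
`ω : U → {1,…,n}` be a bijection such that for every `e ∈ U` the value `ω(e)`
minimizes `x ↦ Σ_i |x − π_i(e)|` over all integers `x` (i.e. `ω(e)` is a
median of the positions of `e`). Then `ω` is a footrule-optimal aggregation:
for every bijection `τ : U → {1,…,n}`, `F(ω,Π) ≤ F(τ,Π)`. -/
theorem median_is_footrule_optimal {U : Type*} [Fintype U] {n m : ℕ}
    (hU : Fintype.card U = n)
    (π : Fin m → U → ℕ)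
    (hπinj : ∀ i, Function.Injective (π i))
    (hπmem : ∀ i, ∀ e, π i e ∈ Finset.Icc 1 n)
    (ω : U → ℕ)
    (hωinj : Function.Injective ω) (hωmem : ∀ e, ω e ∈ Finset.Icc 1 n)
    (hmed : ∀ e : U, ∀ x : ℤ,
      ∑ i : Fin m, ((ω e : ℤ) - (π i e : ℤ)).natAbs
        ≤ ∑ i : Fin m, (x - (π i e : ℤ)).natAbs)
    (τ : U → ℕ)
    (hτinj : Function.Injective τ) (hτmem : ∀ e, τ e ∈ Finset.Icc 1 n) :
    ∑ i : Fin m, ∑ e : U, ((ω e : ℤ) - (π i e : ℤ)).natAbs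
      ≤ ∑ i : Fin m, ∑ e : U, ((τ e : ℤ) - (π i e : ℤ)).natAbs := by
  calc ∑ i : Fin m, ∑ e : U, ((ω e : ℤ) - (π i e : ℤ)).natAbs
      = ∑ e : U, ∑ i : Fin m, ((ω e : ℤ) - (π i e : ℤ)).natAbs := Finset.sum_comm
    _ ≤ ∑ e : U, ∑ i : Fin m, ((τ e : ℤ) - (π i e : ℤ)).natAbs :=
        Finset.sum_le_sum fun e _ => hmed e (τ e)
    _ = ∑ i : Fin m, ∑ e : U, ((τ e : ℤ) - (π i e : ℤ)).natAbs := Finset.sum_comm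
end

section
/- Let Π = [π_1,…,π_m] be a nonempty list of complete rankings over a finite set U of size n, and let π* be a footrule-optimal aggregation of Π. Then a uniformly random ranking π selected from Π satisfies E[F(π,Π)] ≤ 2·F(π*,Π); equivalently, Σ_{j=1}^{m} F(π_j,Π) ≤ 2m · F(π*,Π). -/
/-- Let `Π = [π_1,…,π_m]` be a nonempty list of complete
rankings over a finite set `U` of size `n`, and let `π*` be a footrule-optimal
aggregation of `Π`. Then a uniformly random ranking selected from `Π` satisfies
`E[F(π,Π)] ≤ 2·F(π*,Π)`; equivalently, `Σ_{j=1}^{m} F(π_j,Π) ≤ 2m · F(π*,Π)`. -/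
theorem pick_a_perm_two_approx {U : Type*} [Fintype U] {n m : ℕ}
    (hU : Fintype.card U = n) (hm : 0 < m)
    (π : Fin m → U → ℕ)
    (hπinj : ∀ i, Function.Injective (π i))
    (hπmem : ∀ i, ∀ e, π i e ∈ Finset.Icc 1 n)
    (πstar : U → ℕ)
    (hstarinj : Function.Injective πstar) (hstarmem : ∀ e, πstar e ∈ Finset.Icc 1 n)
    (hopt : ∀ τ : U → ℕ, Function.Injective τ → (∀ e, τ e ∈ Finset.Icc 1 n) →
      ∑ i : Fin m, ∑ e : U, ((πstar e : ℤ) - (π i e : ℤ)).natAbs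
        ≤ ∑ i : Fin m, ∑ e : U, ((τ e : ℤ) - (π i e : ℤ)).natAbs) :
    ∑ j : Fin m, ∑ i : Fin m, ∑ e : U, ((π j e : ℤ) - (π i e : ℤ)).natAbs
      ≤ 2 * m * ∑ i : Fin m, ∑ e : U, ((πstar e : ℤ) - (π i e : ℤ)).natAbs := by
  have key : ∀ j i : Fin m, ∀ e : U,
      ((π j e : ℤ) - (π i e : ℤ)).natAbs
        ≤ ((πstar e : ℤ) - (π j e : ℤ)).natAbs + ((πstar e : ℤ) - (π i e : ℤ)).natAbs := by
    intro j i e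
    have h1 : (π j e : ℤ) - (π i e : ℤ)
        = -(((πstar e : ℤ) - (π j e : ℤ))) + ((πstar e : ℤ) - (π i e : ℤ)) := by ring
    calc ((π j e : ℤ) - (π i e : ℤ)).natAbs
        = (-(((πstar e : ℤ) - (π j e : ℤ))) + ((πstar e : ℤ) - (π i e : ℤ))).natAbs := by
          rw [h1]
      _ ≤ (-(((πstar e : ℤ) - (π j e : ℤ)))).natAbs
            + ((πstar e : ℤ) - (π i e : ℤ)).natAbs := Int.natAbs_add_le _ _
      _ = ((πstar e : ℤ) - (π j e : ℤ)).natAbs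
            + ((πstar e : ℤ) - (π i e : ℤ)).natAbs := by rw [Int.natAbs_neg]
  calc ∑ j : Fin m, ∑ i : Fin m, ∑ e : U, ((π j e : ℤ) - (π i e : ℤ)).natAbs
      ≤ ∑ j : Fin m, ∑ i : Fin m, ∑ e : U,
          (((πstar e : ℤ) - (π j e : ℤ)).natAbs + ((πstar e : ℤ) - (π i e : ℤ)).natAbs) := by
        refine Finset.sum_le_sum fun j _ => Finset.sum_le_sum fun i _ =>
          Finset.sum_le_sum fun e _ => key j i e
    _ = 2 * m * ∑ i : Fin m, ∑ e : U, ((πstar e : ℤ) - (π i e : ℤ)).natAbs := by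
        simp only [Finset.sum_add_distrib, Finset.sum_const, Finset.card_univ,
          Fintype.card_fin, smul_eq_mul]
        rw [← Finset.mul_sum]; ring
end

section
/- Let Π = [π_1,…,π_m] be a nonempty list of complete rankings over a finite set U of size n, let π* be a footrule-optimal aggregation of Π, and let ω : U → {1,…,n} be any complete ranking (e.g., the output of the LR-Aggregation algorithm). Then the algorithm that returns the better (in footrule distance to Π) of ω and a uniformly random ranking from Π is an expected 2-approximation: (1/m) · Σ_{j=1}^{m} min( F(π_j,Π), F(ω,Π) ) ≤ 2·F(π*,Π). -/
/-- Let `Π = [π_1,…,π_m]` be a nonempty list of complete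
rankings over a finite set `U` of size `n`, let `π*` be a footrule-optimal
aggregation of `Π`, and let `ω` be any complete ranking (e.g. the output of
LR-Aggregation). Then the algorithm returning the better (in footrule distance
to `Π`) of `ω` and a uniformly random ranking from `Π` is an expected
2-approximation: `(1/m) · Σ_{j=1}^{m} min(F(π_j,Π), F(ω,Π)) ≤ 2·F(π*,Π)`. -/
theorem dynamic_rank_aggregation_two_approx {U : Type*} [Fintype U] {n m : ℕ}
    (hU : Fintype.card U = n) (hm : 0 < m)
    (π : Fin m → U → ℕ)
    (hπinj : ∀ i, Function.Injective (π i))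
    (hπmem : ∀ i, ∀ e, π i e ∈ Finset.Icc 1 n)
    (πstar : U → ℕ)
    (hstarinj : Function.Injective πstar) (hstarmem : ∀ e, πstar e ∈ Finset.Icc 1 n)
    (hopt : ∀ τ : U → ℕ, Function.Injective τ → (∀ e, τ e ∈ Finset.Icc 1 n) →
      ∑ i : Fin m, ∑ e : U, ((πstar e : ℤ) - (π i e : ℤ)).natAbs
        ≤ ∑ i : Fin m, ∑ e : U, ((τ e : ℤ) - (π i e : ℤ)).natAbs)
    (ω : U → ℕ)
    (hωinj : Function.Injective ω) (hωmem : ∀ e, ω e ∈ Finset.Icc 1 n) :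
    (1 / (m : ℝ)) * ∑ j : Fin m,
        min ((∑ i : Fin m, ∑ e : U, ((π j e : ℤ) - (π i e : ℤ)).natAbs : ℕ) : ℝ)
            ((∑ i : Fin m, ∑ e : U, ((ω e : ℤ) - (π i e : ℤ)).natAbs : ℕ) : ℝ)
      ≤ 2 * ((∑ i : Fin m, ∑ e : U, ((πstar e : ℤ) - (π i e : ℤ)).natAbs : ℕ) : ℝ) := by
  set S : ℕ := ∑ i : Fin m, ∑ e : U, ((πstar e : ℤ) - (π i e : ℤ)).natAbs with hS
  have key : (∑ j : Fin m, ∑ i : Fin m, ∑ e : U,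
      ((π j e : ℤ) - (π i e : ℤ)).natAbs) ≤ 2 * m * S := by
    have h1 : ∀ j i : Fin m, ∀ e : U,
        ((π j e : ℤ) - (π i e : ℤ)).natAbs ≤
          ((πstar e : ℤ) - (π j e : ℤ)).natAbs + ((πstar e : ℤ) - (π i e : ℤ)).natAbs := by
      intro j i e
      have : ((π j e : ℤ) - (π i e : ℤ)).natAbs
          ≤ ((π j e : ℤ) - (πstar e : ℤ)).natAbs + ((πstar e : ℤ) - (π i e : ℤ)).natAbs := by
        have := Int.natAbs_add_le ((π j e : ℤ) - (πstar e : ℤ)) ((πstar e : ℤ) - (π i e : ℤ))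
        simpa using this
      have hsymm : ((π j e : ℤ) - (πstar e : ℤ)).natAbs = ((πstar e : ℤ) - (π j e : ℤ)).natAbs := by
        rw [← Int.natAbs_neg, neg_sub]
      rwa [hsymm] at this
    calc (∑ j : Fin m, ∑ i : Fin m, ∑ e : U, ((π j e : ℤ) - (π i e : ℤ)).natAbs)
        ≤ ∑ j : Fin m, ∑ i : Fin m, ∑ e : U,
            (((πstar e : ℤ) - (π j e : ℤ)).natAbs + ((πstar e : ℤ) - (π i e : ℤ)).natAbs) := by
          refine Finset.sum_le_sum fun j _ => Finset.sum_le_sum fun i _ =>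
            Finset.sum_le_sum fun e _ => h1 j i e
      _ = (∑ j : Fin m, ∑ i : Fin m, ∑ e : U, ((πstar e : ℤ) - (π j e : ℤ)).natAbs)
          + (∑ j : Fin m, ∑ i : Fin m, ∑ e : U, ((πstar e : ℤ) - (π i e : ℤ)).natAbs) := by
          simp [Finset.sum_add_distrib]
      _ = m * S + m * S := by
          congr 1
          · rw [Finset.sum_comm]
            simp [hS, Finset.sum_const, Finset.mul_sum]
          · simp [hS, Finset.sum_const]
      _ = 2 * m * S := by ring
  have hmin : (∑ j : Fin m,
      min ((∑ i : Fin m, ∑ e : U, ((π j e : ℤ) - (π i e : ℤ)).natAbs : ℕ) : ℝ)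
          ((∑ i : Fin m, ∑ e : U, ((ω e : ℤ) - (π i e : ℤ)).natAbs : ℕ) : ℝ))
      ≤ ((2 * m * S : ℕ) : ℝ) := by
    calc (∑ j : Fin m,
        min ((∑ i : Fin m, ∑ e : U, ((π j e : ℤ) - (π i e : ℤ)).natAbs : ℕ) : ℝ)
            ((∑ i : Fin m, ∑ e : U, ((ω e : ℤ) - (π i e : ℤ)).natAbs : ℕ) : ℝ))
        ≤ ∑ j : Fin m,
            ((∑ i : Fin m, ∑ e : U, ((π j e : ℤ) - (π i e : ℤ)).natAbs : ℕ) : ℝ) := by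
          exact Finset.sum_le_sum fun j _ => min_le_left _ _
      _ = ((∑ j : Fin m, ∑ i : Fin m, ∑ e : U,
            ((π j e : ℤ) - (π i e : ℤ)).natAbs : ℕ) : ℝ) := by push_cast; ring
      _ ≤ ((2 * m * S : ℕ) : ℝ) := by exact_mod_cast key
  have hm' : (0 : ℝ) < m := by exact_mod_cast hm
  rw [div_mul_eq_mul_div, one_mul, div_le_iff₀ hm']
  calc (∑ j : Fin m,
      min ((∑ i : Fin m, ∑ e : U, ((π j e : ℤ) - (π i e : ℤ)).natAbs : ℕ) : ℝ)
          ((∑ i : Fin m, ∑ e : U, ((ω e : ℤ) - (π i e : ℤ)).natAbs : ℕ) : ℝ))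
      ≤ ((2 * m * S : ℕ) : ℝ) := hmin
    _ = 2 * (S : ℝ) * m := by push_cast; ring
end

section
/- Let Π = [π_1,…,π_m] be a list of complete rankings over a finite set U of size n and let π be a complete ranking over U. Then the LR-distance between π and the domain equals the footrule distance between π and the domain: LR(π,Π) = Σ_{i=1}^{m} LR(π,π_i) = Σ_{i=1}^{m} Σ_{e∈U} |π(e) − π_i(e)| = F(π,Π). -/
lemma LRint_eq_sum_cross {U : Type*} [Fintype U] (π σ : U → ℕ) (a b : ℕ) :
    LRint π σ a b = ∑ t ∈ Finset.Ico a b,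
      ((Finset.univ.filter (fun e => π e ≤ t ∧ t < σ e)).card +
       (Finset.univ.filter (fun e => t < π e ∧ σ e ≤ t)).card) := by
  rw [LRint]
  split_ifs with h
  · rw [Finset.Ico_eq_empty (by omega), Finset.sum_empty]
  · have h1 : a ≤ (a + b) / 2 := by omega
    have h2 : (a + b) / 2 < b := by omega
    rw [LRint_eq_sum_cross π σ a ((a + b) / 2),
        LRint_eq_sum_cross π σ ((a + b) / 2 + 1) b,
        ← Finset.sum_Ico_consecutive _ h1 (le_of_lt h2),
        Finset.sum_eq_sum_Ico_succ_bot h2]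
    omega
termination_by b - a
decreasing_by all_goals omega

lemma sum_cross_eq_footrule {U : Type*} [Fintype U] {n : ℕ} (π σ : U → ℕ)
    (hπ : ∀ e, π e ∈ Finset.Icc 1 n) (hσ : ∀ e, σ e ∈ Finset.Icc 1 n) :
    (∑ t ∈ Finset.Ico 1 n,
      ((Finset.univ.filter (fun e => π e ≤ t ∧ t < σ e)).card +
       (Finset.univ.filter (fun e => t < π e ∧ σ e ≤ t)).card))
      = ∑ e : U, ((π e : ℤ) - (σ e : ℤ)).natAbs := by
  have key : ∀ t, ((Finset.univ.filter (fun e => π e ≤ t ∧ t < σ e)).card +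
       (Finset.univ.filter (fun e => t < π e ∧ σ e ≤ t)).card)
      = ∑ e : U, ((if π e ≤ t ∧ t < σ e then 1 else 0) +
                  (if t < π e ∧ σ e ≤ t then 1 else 0)) := by
    intro t
    rw [Finset.sum_add_distrib, Finset.card_filter, Finset.card_filter]
  simp_rw [key]
  rw [Finset.sum_comm]
  refine Finset.sum_congr rfl (fun e _ => ?_)
  have hπe := hπ e
  have hσe := hσ e
  simp only [Finset.mem_Icc] at hπe hσe
  rw [Finset.sum_add_distrib, ← Finset.card_filter, ← Finset.card_filter]
  have e1 : (Finset.Ico 1 n).filter (fun t => π e ≤ t ∧ t < σ e)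
      = Finset.Ico (π e) (σ e) := by
    ext t; simp only [Finset.mem_filter, Finset.mem_Ico]; omega
  have e2 : (Finset.Ico 1 n).filter (fun t => t < π e ∧ σ e ≤ t)
      = Finset.Ico (σ e) (π e) := by
    ext t; simp only [Finset.mem_filter, Finset.mem_Ico]; omega
  rw [e1, e2, Nat.card_Ico, Nat.card_Ico]
  omega

/-- Let `Π = [π_1,…,π_m]` be a list of complete rankings over
a finite set `U` of size `n` and let `π` be a complete ranking over `U`. Then
the LR-distance between `π` and the domain equals the footrule distance between
`π` and the domain: `LR(π,Π) = Σ_i LR(π,π_i) = Σ_i Σ_e |π(e) − π_i(e)| = F(π,Π)`. -/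
theorem lr_domain_eq_footrule_domain {U : Type*} [Fintype U] {n m : ℕ}
    (hU : Fintype.card U = n)
    (πs : Fin m → U → ℕ)
    (hπs_inj : ∀ i, Function.Injective (πs i))
    (hπs_mem : ∀ i, ∀ e, πs i e ∈ Finset.Icc 1 n)
    (π : U → ℕ)
    (hπinj : Function.Injective π) (hπmem : ∀ e, π e ∈ Finset.Icc 1 n) :
    ∑ i : Fin m, LRdist π (πs i) n
      = ∑ i : Fin m, ∑ e : U, ((π e : ℤ) - (πs i e : ℤ)).natAbs := by
  refine Finset.sum_congr rfl (fun i _ => ?_)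
  rw [LRdist, LRint_eq_sum_cross, sum_cross_eq_footrule π (πs i) hπmem (hπs_mem i)]
end
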